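/- Let N, K be positive integers, let C be a real symmetric N×N matrix, let s be a nonnegative real number, and define J(X, Y) = (1/2)·‖C − X·Yᵀ‖_F² + (s/2)·‖X − Y‖_F² for N×K real matrices X, Y. Then for any fixed N×K real matrix X, the map Y ↦ ∇_Y J(X, Y) = (Y·Xᵀ − C)·X + s·(Y − X) is globally Lipschitz continuous with respect to the Frobenius norm, with Lipschitz constant L₂(X) = ‖Xᵀ·X + s·I_K‖₂, i.e., for all N×K real matrices Y, Y' it holds that ‖∇_Y J(X, Y) − ∇_Y J(X, Y')‖_F ≤ ‖Xᵀ·X + s·I_K‖₂ · ‖Y − Y'‖_F. -/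

import Mathlib

open Matrix

/-- The Frobenius norm of a real matrix. -/
noncomputable def frobNorm {N K : ℕ} (A : Matrix (Fin N) (Fin K) ℝ) : ℝ :=
  Real.sqrt (∑ i, ∑ k, (A i k) ^ 2)

/-- The spectral norm (operator 2-norm, i.e. largest singular value) of a real
square matrix, as the operator norm of the induced map on Euclidean space. -/
noncomputable def matSpectralNorm {K : ℕ} (M : Matrix (Fin K) (Fin K) ℝ) : ℝ :=
  ‖LinearMap.toContinuousLinearMap (Matrix.toEuclideanLin M)‖

/-!
The difference of the two gradients is `(Y - Y') * (Xᵀ * X + s • 1)`: the terms in `C` and `s • X`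
cancel. Right multiplication by `M` acts on each row as the operator `Mᵀ`, so it scales every row's
Euclidean norm, hence the Frobenius norm, by at most `‖Mᵀ‖₂ = ‖M‖₂` for symmetric `M`.
-/

lemma frobNorm_eq_sqrt_sum_norm_row_sq {N K : ℕ} (A : Matrix (Fin N) (Fin K) ℝ) :
    frobNorm A = √(∑ i, ‖WithLp.toLp 2 (A i)‖ ^ 2) := by
  simp only [frobNorm, EuclideanSpace.norm_sq_eq, Real.norm_eq_abs, sq_abs]

lemma toEuclideanLin_transpose_row {N K L : ℕ} (A : Matrix (Fin N) (Fin K) ℝ)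
    (M : Matrix (Fin K) (Fin L) ℝ) (i : Fin N) :
    toEuclideanLin Mᵀ (WithLp.toLp 2 (A i)) = WithLp.toLp 2 ((A * M) i) := by
  rw [mul_apply_eq_vecMul, ← mulVec_transpose]
  rfl

lemma frobNorm_mul_le {N K L : ℕ} (A : Matrix (Fin N) (Fin K) ℝ)
    (M : Matrix (Fin K) (Fin L) ℝ) :
    frobNorm (A * M) ≤ ‖LinearMap.toContinuousLinearMap (toEuclideanLin Mᵀ)‖ * frobNorm A := by
  set T := LinearMap.toContinuousLinearMap (toEuclideanLin Mᵀ)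
  have hrow (i : Fin N) :
      ‖WithLp.toLp 2 ((A * M) i)‖ ^ 2 ≤ ‖T‖ ^ 2 * ‖WithLp.toLp 2 (A i)‖ ^ 2 := by
    rw [← mul_pow, ← toEuclideanLin_transpose_row]
    exact pow_le_pow_left₀ (norm_nonneg _) (T.le_opNorm _) 2
  rw [frobNorm_eq_sqrt_sum_norm_row_sq, frobNorm_eq_sqrt_sum_norm_row_sq,
    ← Real.sqrt_sq (norm_nonneg T), ← Real.sqrt_mul (sq_nonneg _), Finset.mul_sum]
  exact Real.sqrt_le_sqrt (Finset.sum_le_sum fun i _ => hrow i)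

lemma frobNorm_mul_le_matSpectralNorm {N K : ℕ} (A : Matrix (Fin N) (Fin K) ℝ)
    {M : Matrix (Fin K) (Fin K) ℝ} (hM : M.IsSymm) :
    frobNorm (A * M) ≤ matSpectralNorm M * frobNorm A := by
  unfold matSpectralNorm
  simpa only [hM.eq] using frobNorm_mul_le A M

lemma gradY_sub_gradY {N K : ℕ} (C : Matrix (Fin N) (Fin N) ℝ) (s : ℝ)
    (X Y Y' : Matrix (Fin N) (Fin K) ℝ) :
    ((Y * Xᵀ - C) * X + s • (Y - X)) - ((Y' * Xᵀ - C) * X + s • (Y' - X)) =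
      (Y - Y') * (Xᵀ * X + s • (1 : Matrix (Fin K) (Fin K) ℝ)) := by
  simp only [Matrix.mul_add, Matrix.sub_mul, Matrix.mul_smul, Matrix.mul_one, Matrix.mul_assoc,
    smul_sub]
  abel

theorem gradY_lipschitz_general (N K : ℕ)
    (C : Matrix (Fin N) (Fin N) ℝ) (s : ℝ)
    (X : Matrix (Fin N) (Fin K) ℝ) :
    ∀ Y Y' : Matrix (Fin N) (Fin K) ℝ,
      frobNorm (((Y * Xᵀ - C) * X + s • (Y - X)) - ((Y' * Xᵀ - C) * X + s • (Y' - X)))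
        ≤ matSpectralNorm (Xᵀ * X + s • (1 : Matrix (Fin K) (Fin K) ℝ)) * frobNorm (Y - Y') := by
  intro Y Y'
  have hsymm : (Xᵀ * X + s • (1 : Matrix (Fin K) (Fin K) ℝ)).IsSymm :=
    IsSymm.add (transpose_mul Xᵀ X) (isSymm_one.smul s)
  rw [gradY_sub_gradY]
  exact frobNorm_mul_le_matSpectralNorm _ hsymm

/-- For `J(X, Y) = (1/2)·‖C − X·Yᵀ‖_F² + (s/2)·‖X − Y‖_F²` with `C` symmetric and `s ≥ 0`,
the map `Y ↦ ∇_Y J(X, Y) = (Y·Xᵀ − C)·X + s·(Y − X)` is globally Lipschitz in the Frobenius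
norm with constant `‖Xᵀ·X + s·I_K‖₂`. -/
theorem gradY_lipschitz (N K : ℕ) (hN : 0 < N) (hK : 0 < K)
    (C : Matrix (Fin N) (Fin N) ℝ) (hC : Cᵀ = C) (s : ℝ) (hs : 0 ≤ s)
    (X : Matrix (Fin N) (Fin K) ℝ) :
    ∀ Y Y' : Matrix (Fin N) (Fin K) ℝ,
      frobNorm (((Y * Xᵀ - C) * X + s • (Y - X)) - ((Y' * Xᵀ - C) * X + s • (Y' - X)))
        ≤ matSpectralNorm (Xᵀ * X + s • (1 : Matrix (Fin K) (Fin K) ℝ)) * frobNorm (Y - Y') :=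
  gradY_lipschitz_general N K C s X
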